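/- Let S₁ ⊆ A with 1 ∉ S₁, S₁ ∈ B(A) and ⟨S₁⟩ = A (for instance S₁ = A \ {1}), and let D be a non-empty finite set of positive integers such that the distance power Cay(Dic(A,y), S₁ ∪ x{1,y})^D is connected. Then Cay(Dic(A,y), S₁ ∪ x{1,y})^D is a Cayley graph over Dic(A,y) which is distance integral. -/

import Mathlib

open scoped Classical Pointwise

/-- The generalized dicyclic group `Dic(A, y)` where `y : A` satisfies `y * y = 1`.
The element `⟨t, a⟩` represents `x^t * a`, where `x` is the extra generator with
`x ^ 2 = y` and `x * a * x⁻¹ = a⁻¹` for all `a ∈ A`. -/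
@[ext]
structure Dic (A : Type*) [CommGroup A] (y : A) (hy : y * y = 1) where
  t : Bool
  a : A

namespace Dic

variable {A : Type*} [CommGroup A] {y : A} {hy : y * y = 1}

instance : Mul (Dic A y hy) :=
  ⟨fun g h => ⟨xor g.t h.t, (if h.t then g.a⁻¹ else g.a) * h.a * (if g.t && h.t then y else 1)⟩⟩

instance : One (Dic A y hy) := ⟨⟨false, 1⟩⟩

instance : Inv (Dic A y hy) := ⟨fun g => ⟨g.t, if g.t then y * g.a else g.a⁻¹⟩⟩

@[simp] lemma mul_t (g h : Dic A y hy) : (g * h).t = xor g.t h.t := rfl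
@[simp] lemma mul_a (g h : Dic A y hy) :
    (g * h).a = (if h.t then g.a⁻¹ else g.a) * h.a * (if g.t && h.t then y else 1) := rfl
@[simp] lemma one_t : (1 : Dic A y hy).t = false := rfl
@[simp] lemma one_a : (1 : Dic A y hy).a = 1 := rfl
@[simp] lemma inv_t (g : Dic A y hy) : g⁻¹.t = g.t := rfl
@[simp] lemma inv_a (g : Dic A y hy) : g⁻¹.a = if g.t then y * g.a else g.a⁻¹ := rfl

instance : Group (Dic A y hy) where
  mul_assoc g₁ g₂ g₃ := by
    have hyi : y⁻¹ = y := inv_eq_of_mul_eq_one_right hy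
    ext
    · cases g₁.t <;> cases g₂.t <;> cases g₃.t <;> simp
    · cases h₁ : g₁.t <;> cases h₂ : g₂.t <;> cases h₃ : g₃.t <;>
        simp [h₁, h₂, h₃, hyi, mul_inv_rev, mul_comm, mul_assoc, mul_left_comm]
  one_mul g := by ext <;> simp
  mul_one g := by ext <;> simp
  inv_mul_cancel g := by
    ext
    · simp
    · cases h : g.t <;> simp [h, mul_inv_rev, mul_comm, mul_assoc, mul_left_comm]

/-- The canonical embedding of `A` into `Dic A y hy`. -/
def ofA (a : A) : Dic A y hy := ⟨false, a⟩

/-- The extra generator `x` of `Dic A y hy`, satisfying `x ^ 2 = y`. -/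
def x (A : Type*) [CommGroup A] (y : A) (hy : y * y = 1) : Dic A y hy := ⟨true, 1⟩

instance [Fintype A] : Fintype (Dic A y hy) :=
  Fintype.ofEquiv (Bool × A)
    { toFun := fun p => ⟨p.1, p.2⟩
      invFun := fun g => (g.t, g.a)
      left_inv := fun _ => rfl
      right_inv := fun _ => rfl }

end Dic

/-- The Cayley graph of a group `G` with respect to a connection set `S`.  When `1 ∉ S` and
`S⁻¹ = S`, two vertices `g h` are adjacent if and only if `g⁻¹ * h ∈ S`. -/
def cayley {G : Type*} [Group G] (S : Set G) : SimpleGraph G :=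
  SimpleGraph.fromRel fun g h => g⁻¹ * h ∈ S

/-- A graph on a finite vertex set is integral if all eigenvalues of its adjacency matrix
are integers. -/
noncomputable def IsIntegralGraph {V : Type*} [Fintype V] (Γ : SimpleGraph V) : Prop :=
  ∀ μ ∈ spectrum ℝ (Γ.adjMatrix ℝ), ∃ k : ℤ, (k : ℝ) = μ

/-- The distance matrix of a graph on a finite vertex set. -/
noncomputable def distMatrix {V : Type*} [Fintype V] (Γ : SimpleGraph V) : Matrix V V ℝ :=
  Matrix.of fun v w => (Γ.dist v w : ℝ)

/-- A (connected) graph on a finite vertex set is distance integral if all eigenvalues of its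
distance matrix are integers. -/
noncomputable def IsDistanceIntegral {V : Type*} [Fintype V] (Γ : SimpleGraph V) : Prop :=
  ∀ μ ∈ spectrum ℝ (distMatrix Γ), ∃ k : ℤ, (k : ℝ) = μ

/-- The Boolean algebra `B(A)` of a group `A`: the collection of subsets of `A` generated by
the subgroups of `A` under finite intersections, unions, and complements. -/
inductive InBoolAlg (A : Type*) [Group A] : Set A → Prop
  | subgroup (H : Subgroup A) : InBoolAlg A (H : Set A)
  | compl {s : Set A} : InBoolAlg A s → InBoolAlg A sᶜ
  | union {s t : Set A} : InBoolAlg A s → InBoolAlg A t → InBoolAlg A (s ∪ t)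
  | inter {s t : Set A} : InBoolAlg A s → InBoolAlg A t → InBoolAlg A (s ∩ t)

/-- `mulPow S n = S^(n)`, the set of products of `n` elements of `S` (`S^(0) = {1}`). -/
def mulPow {G : Type*} [Monoid G] (S : Set G) (n : ℕ) : Set G :=
  {g | ∃ l : List G, l.length = n ∧ (∀ u ∈ l, u ∈ S) ∧ l.prod = g}

/-- `wordLen S g = ℓ_S(g)`: `0` if `g = 1`, and otherwise the least `n ≥ 1` such that `g` is a
product of `n` elements of `S`. -/
noncomputable def wordLen {G : Type*} [Group G] (S : Set G) (g : G) : ℕ :=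
  if g = 1 then 0 else sInf {n : ℕ | g ∈ mulPow S n}

/-- The distance power `Γ^D`: two distinct vertices are adjacent iff their distance in `Γ`
belongs to `D`. -/
def distPower {V : Type*} (Γ : SimpleGraph V) (D : Finset ℕ) : SimpleGraph V where
  Adj v w := v ≠ w ∧ Γ.dist v w ∈ D
  symm := ⟨fun v w h => ⟨h.1.symm, by rw [SimpleGraph.dist_comm]; exact h.2⟩⟩
  loopless := ⟨fun v h => h.1 rfl⟩

/-- A multiset `(A, f)` lies in `C(A)` iff `f` is constant on each atom
`[a] = {b : ⟨b⟩ = ⟨a⟩}`. -/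
def InCA {A : Type*} [Group A] (f : A → ℕ) : Prop :=
  ∀ a b : A, Subgroup.zpowers a = Subgroup.zpowers b → f a = f b

/-- The two-dimensional representation `R_π` of `Dic A y hy` induced by a one-dimensional
representation `π` of `A`:  `R_π(x) = [[0, π y], [1, 0]]` and `R_π(a) = diag(π a, π a⁻¹)`. -/
noncomputable def Rpi {A : Type*} [CommGroup A] {y : A} {hy : y * y = 1}
    (π : A →* ℂ) (g : Dic A y hy) : Matrix (Fin 2) (Fin 2) ℂ :=
  (if g.t then !![0, π y; 1, 0] else 1) * !![π g.a, 0; 0, π g.a⁻¹]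

/-- The complex-conjugate of a one-dimensional representation. -/
def conjHom {A : Type*} [CommGroup A] (π : A →* ℂ) : A →* ℂ :=
  (starRingEnd ℂ).toMonoidHom.comp π

/-! The distance power of `Cay(G, S)` is the Cayley graph with connection set
`{g ≠ 1 | d(1, g) ∈ D}`, so its distance matrix is the group matrix of `f g = d'(1, g)`, `d'` its
own distance. Such an `f` is invariant under inversion and under every automorphism of `Dic(A, y)`
preserving the connection set. Because `S₁ ∈ B(A)`, the power maps `(t, a) ↦ (t, a ^ k)` with `k`
coprime to `|A|` are such automorphisms, so on each coset of `A` the function `f` is constant on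
the atoms `{b | ⟨b⟩ = ⟨a⟩}`.

For a character `π` of `A`, the functions `(false, a) ↦ π a`, `(true, a) ↦ ± π a⁻¹` (coefficients
of the representation induced from `π`) are eigenfunctions of the group matrix, with eigenvalues
`∑ₐ f(false, a) π a ± ∑ₐ f(true, a) π a`. These are integers: the sum of `π` over an atom is an
integer by inclusion–exclusion over the cyclic subgroups, starting from the sums over subgroups,
which are `0` or the order. As the characters span all functions on `A`, these eigenfunctions span
all functions on `Dic(A, y)`, so every eigenvalue is one of these integers. -/

open Finset
open scoped Matrix

namespace SimpleGraph

variable {V W : Type*} {G : SimpleGraph V} {G' : SimpleGraph W}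

theorem Hom.dist_le_of_reachable (f : G →g G') {u v : V} (h : G.Reachable u v) :
    G'.dist (f u) (f v) ≤ G.dist u v := by
  obtain ⟨p, hp⟩ := h.exists_walk_length_eq_dist
  calc G'.dist (f u) (f v) ≤ (p.map f).length := G'.dist_le _
    _ = G.dist u v := by rw [Walk.length_map, hp]

theorem Iso.dist_eq (e : G ≃g G') (u v : V) : G'.dist (e u) (e v) = G.dist u v := by
  by_cases h : G.Reachable u v
  · refine le_antisymm (Hom.dist_le_of_reachable e.toHom h) ?_
    simpa using Hom.dist_le_of_reachable e.symm.toHom (Iso.reachable_iff (φ := e) |>.mpr h)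
  · rw [dist_eq_zero_of_not_reachable h,
      dist_eq_zero_of_not_reachable (mt Iso.reachable_iff.mp h)]

end SimpleGraph

section Cayley

variable {G H : Type*} [Group G] [Group H]

theorem cayley_adj (S : Set G) (a b : G) :
    (cayley S).Adj a b ↔ a ≠ b ∧ (a⁻¹ * b ∈ S ∨ b⁻¹ * a ∈ S) :=
  SimpleGraph.fromRel_adj _ _ _

def cayleyIsoOfMulEquiv (φ : G ≃* H) {S : Set G} {T : Set H} (hφ : ∀ g, φ g ∈ T ↔ g ∈ S) :
    cayley S ≃g cayley T where
  toEquiv := φ.toEquiv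
  map_rel_iff' {a b} := by
    simp [cayley_adj, ← map_inv, ← map_mul, hφ]

def cayleyIsoMulLeft (S : Set G) (g : G) : cayley S ≃g cayley S where
  toEquiv := Equiv.mulLeft g
  map_rel_iff' {a b} := by
    simp [cayley_adj, mul_assoc]

theorem cayley_dist_eq (S : Set G) (v w : G) :
    (cayley S).dist v w = (cayley S).dist 1 (v⁻¹ * w) := by
  have h : (cayley S).dist (v⁻¹ * v) (v⁻¹ * w) = (cayley S).dist v w :=
    (cayleyIsoMulLeft S v⁻¹).dist_eq v w
  rw [← h, inv_mul_cancel]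

theorem cayley_dist_one_inv (S : Set G) (g : G) :
    (cayley S).dist 1 g⁻¹ = (cayley S).dist 1 g := by
  rw [SimpleGraph.dist_comm, cayley_dist_eq, mul_one, inv_inv]

theorem cayley_dist_one_map (φ : G ≃* G) {S : Set G} (hφ : ∀ g, φ g ∈ S ↔ g ∈ S) (g : G) :
    (cayley S).dist 1 (φ g) = (cayley S).dist 1 g := by
  have h : (cayley S).dist (φ 1) (φ g) = (cayley S).dist 1 g :=
    (cayleyIsoOfMulEquiv φ hφ).dist_eq 1 g
  rwa [map_one] at h

theorem distPower_cayley (S : Set G) (D : Finset ℕ) :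
    distPower (cayley S) D = cayley {g | g ≠ 1 ∧ (cayley S).dist 1 g ∈ D} := by
  ext v w
  change v ≠ w ∧ _ ↔ _
  rw [cayley_adj]
  simp only [Set.mem_ofPred_eq, ne_eq, inv_mul_eq_one, ← cayley_dist_eq,
    SimpleGraph.dist_comm (u := w)]
  tauto

def groupMatrix {R : Type*} (f : G → R) : Matrix G G R :=
  Matrix.of fun g h => f (g⁻¹ * h)

theorem distMatrix_cayley [Fintype G] (S : Set G) :
    distMatrix (cayley S) = groupMatrix fun g => ((cayley S).dist 1 g : ℝ) := by
  ext v w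
  simp [distMatrix, groupMatrix, ← cayley_dist_eq]

theorem groupMatrix_mulVec_apply [Fintype G] {R : Type*} [NonUnitalNonAssocSemiring R]
    (f φ : G → R) (g : G) : (groupMatrix f *ᵥ φ) g = ∑ w, f w * φ (g * w) := by
  simp only [Matrix.mulVec, dotProduct, groupMatrix, Matrix.of_apply]
  exact Fintype.sum_equiv (Equiv.mulLeft g⁻¹) _ _ fun h => by simp

end Cayley

theorem Nat.exists_coprime_modEq_of_dvd {n N j : ℕ} (hN : N ≠ 0) (hnN : n ∣ N)
    (hj : j.Coprime n) : ∃ k, k.Coprime N ∧ k ≡ j [MOD n] := by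
  have : NeZero N := ⟨hN⟩
  obtain ⟨u, hu⟩ := ZMod.unitsMap_surjective hnN (ZMod.unitOfCoprime j hj)
  refine ⟨(u : ZMod N).val, ZMod.val_coe_unit_coprime u, ?_⟩
  rw [← ZMod.natCast_eq_natCast_iff, ← ZMod.cast_eq_val, ← ZMod.unitsMap_val hnN, hu]
  rfl

theorem exists_coprime_pow_eq_of_zpowers_eq {G : Type*} [Group G] [Finite G] {a b : G}
    (h : Subgroup.zpowers a = Subgroup.zpowers b) :
    ∃ k, (Nat.card G).Coprime k ∧ a ^ k = b := by
  obtain ⟨j, rfl⟩ := (mem_powers_iff_mem_zpowers.mpr (h ▸ Subgroup.mem_zpowers b) :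
    b ∈ Submonoid.powers a)
  have hj : j.Coprime (orderOf a) := mem_zpowers_pow_iff.mp (h ▸ Subgroup.mem_zpowers a)
  obtain ⟨k, hk, hkj⟩ := Nat.exists_coprime_modEq_of_dvd Nat.card_pos.ne' (orderOf_dvd_natCard a) hj
  exact ⟨k, hk.symm, pow_eq_pow_iff_modEq.mpr hkj⟩

theorem pow_eq_self_of_coprime {G : Type*} [Group G] {y : G} (hy : y * y = 1) {k : ℕ}
    (hk : (Nat.card G).Coprime k) : y ^ k = y := by
  have hc : (orderOf y).Coprime k := hk.coprime_dvd_left (orderOf_dvd_natCard y)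
  have h2 : orderOf y ∣ 2 := orderOf_dvd_of_pow_eq_one (by rw [sq, hy])
  rcases (Nat.dvd_prime Nat.prime_two).mp h2 with h | h
  · rw [orderOf_eq_one_iff.mp h, one_pow]
  · rw [← pow_mod_orderOf, h, Nat.odd_iff.mp (Nat.coprime_two_left.mp (h ▸ hc)), pow_one]

theorem InBoolAlg.pow_mem_iff {A : Type*} [Group A] {S : Set A} (hS : InBoolAlg A S) {k : ℕ}
    (hk : (Nat.card A).Coprime k) (a : A) : a ^ k ∈ S ↔ a ∈ S := by
  induction hS generalizing a with
  | subgroup H =>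
    refine ⟨fun h => ?_, fun h => H.pow_mem h k⟩
    have h' := H.zpow_mem h ((Nat.card A).gcdB k)
    rwa [← powCoprime_apply hk, ← powCoprime_symm_apply hk, Equiv.symm_apply_apply] at h'
  | compl _ ih => exact not_congr (ih a)
  | union _ _ ihs iht => exact or_congr (ihs a) (iht a)
  | inter _ _ ihs iht => exact and_congr (ihs a) (iht a)

namespace Dic

variable {A : Type*} [CommGroup A] {y : A} {hy : y * y = 1}

noncomputable def powMulEquiv {k : ℕ} (hk : (Nat.card A).Coprime k) : Dic A y hy ≃* Dic A y hy where
  toFun g := ⟨g.t, powCoprime hk g.a⟩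
  invFun g := ⟨g.t, (powCoprime hk).symm g.a⟩
  left_inv g := Dic.ext rfl ((powCoprime hk).symm_apply_apply g.a)
  right_inv g := Dic.ext rfl ((powCoprime hk).apply_symm_apply g.a)
  map_mul' := by
    have hyk : y ^ k = y := pow_eq_self_of_coprime hy hk
    rintro ⟨s, a⟩ ⟨t, b⟩
    ext
    · rfl
    · cases s <;> cases t <;> simp [mul_pow, inv_pow, hyk]

theorem powMulEquiv_apply {k : ℕ} (hk : (Nat.card A).Coprime k) (g : Dic A y hy) :
    powMulEquiv hk g = ⟨g.t, g.a ^ k⟩ :=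
  rfl

theorem mem_image_ofA {T : Set A} {g : Dic A y hy} : g ∈ ofA '' T ↔ g.t = false ∧ g.a ∈ T := by
  constructor
  · rintro ⟨a, ha, rfl⟩
    exact ⟨rfl, ha⟩
  · rintro ⟨ht, ha⟩
    exact ⟨g.a, ha, Dic.ext ht.symm rfl⟩

theorem mem_image_x_mul_ofA {T : Set A} {g : Dic A y hy} :
    g ∈ (fun a => x A y hy * ofA a) '' T ↔ g.t = true ∧ g.a ∈ T := by
  constructor
  · rintro ⟨a, ha, rfl⟩
    exact ⟨rfl, by simpa [x, ofA] using ha⟩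
  · rintro ⟨ht, ha⟩
    exact ⟨g.a, ha, Dic.ext (by simp [x, ofA, ht]) (by simp [x, ofA])⟩

theorem powMulEquiv_mem_iff {S₁ : Set A} (hS₁ : InBoolAlg A S₁) {k : ℕ}
    (hk : (Nat.card A).Coprime k) (g : Dic A y hy) :
    powMulEquiv hk g ∈ ofA '' S₁ ∪ (fun a => x A y hy * ofA a) '' {1, y} ↔
      g ∈ ofA '' S₁ ∪ (fun a => x A y hy * ofA a) '' {1, y} := by
  have hinj : Function.Injective fun a : A => a ^ k := (powCoprime hk).injective
  simp only [Set.mem_union, mem_image_ofA, mem_image_x_mul_ofA, powMulEquiv_apply,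
    hS₁.pow_mem_iff hk, Set.mem_insert_iff, Set.mem_singleton_iff,
    hinj.eq_iff' (one_pow k), hinj.eq_iff' (pow_eq_self_of_coprime hy hk)]

theorem sum_eq_add [Fintype A] {M : Type*} [AddCommMonoid M] (F : Dic A y hy → M) :
    ∑ g, F g = ∑ a, F ⟨false, a⟩ + ∑ a, F ⟨true, a⟩ := by
  rw [add_comm, ← Fintype.sum_bool (fun t => ∑ a, F ⟨t, a⟩), ← Fintype.sum_prod_type']
  exact Fintype.sum_equiv ⟨fun g => (g.t, g.a), fun p => ⟨p.1, p.2⟩, fun _ => rfl, fun _ => rfl⟩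
    _ _ fun _ => rfl

theorem inCA_of_forall_powMulEquiv [Finite A] {f : Dic A y hy → ℕ}
    (hf : ∀ k (hk : (Nat.card A).Coprime k) g, f (powMulEquiv hk g) = f g) (t : Bool) :
    InCA fun a => f ⟨t, a⟩ := by
  intro a b hab
  obtain ⟨k, hk, rfl⟩ := exists_coprime_pow_eq_of_zpowers_eq hab
  exact (hf k hk ⟨t, a⟩).symm

end Dic

section Characters

variable {A : Type*} [CommGroup A]

theorem span_range_monoidHom_eq_top [Finite A] :
    Submodule.span ℂ (Set.range fun π : A →* ℂ => (π : A → ℂ)) = ⊤ := by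
  have h := (AddChar.complexBasis (Additive A)).span_eq
  rw [AddChar.coe_complexBasis] at h
  refine top_unique (h.symm.le.trans (Submodule.span_mono ?_))
  rintro _ ⟨ψ, rfl⟩
  exact ⟨ψ.toMonoidHom, rfl⟩

variable [Fintype A] (π : A →* ℂ)

theorem sum_subgroup_mem_bot (H : Subgroup A) :
    ∑ a ∈ univ.filter (· ∈ H), π a ∈ (⊥ : Subring ℂ) := by
  rw [Finset.sum_subtype (p := (· ∈ H)) _ (by simp) π]
  have h := sum_hom_units (π.comp H.subtype)
  simp only [MonoidHom.comp_apply, Subgroup.coe_subtype] at h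
  rw [h]
  exact natCast_mem _ _

theorem sum_zpowers_eq_mem_bot (K : Subgroup A) :
    ∑ b ∈ univ.filter (fun b => Subgroup.zpowers b = K), π b ∈ (⊥ : Subring ℂ) := by
  induction K using WellFoundedLT.induction with
  | _ K ih =>
  set T := (univ.filter (· ∈ K)).image Subgroup.zpowers
  have hsplit : ∑ a ∈ univ.filter (· ∈ K), π a =
      ∑ L ∈ T, ∑ b ∈ univ.filter (fun b => Subgroup.zpowers b = L), π b := by
    rw [← Finset.sum_fiberwise_of_maps_to (t := T) (g := Subgroup.zpowers)
      (fun a ha => mem_image_of_mem _ ha)]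
    refine Finset.sum_congr rfl fun L hL => ?_
    obtain ⟨c, hc, rfl⟩ := mem_image.mp hL
    have hcK : Subgroup.zpowers c ≤ K := Subgroup.zpowers_le.mpr (by simpa using hc)
    rw [Finset.filter_filter]
    refine Finset.sum_congr (Finset.filter_congr fun b _ => ?_) fun _ _ => rfl
    exact ⟨And.right, fun h => ⟨hcK (h ▸ Subgroup.mem_zpowers b), h⟩⟩
  by_cases hK : K ∈ T
  · rw [← Finset.add_sum_erase T _ hK] at hsplit
    rw [eq_sub_of_add_eq hsplit.symm]
    refine sub_mem (sum_subgroup_mem_bot π K) (sum_mem fun L hL => ih L ?_)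
    obtain ⟨hLK, hL⟩ := mem_erase.mp hL
    obtain ⟨c, hc, rfl⟩ := mem_image.mp hL
    exact lt_of_le_of_ne (Subgroup.zpowers_le.mpr (by simpa using hc)) hLK
  · rw [Finset.sum_eq_zero fun b hb => absurd ?_ hK]
    · exact zero_mem _
    obtain rfl := (mem_filter.mp hb).2
    exact mem_image_of_mem _ (by simp [Subgroup.mem_zpowers b])

theorem InCA.sum_mul_mem_bot {F : A → ℕ} (hF : InCA F) :
    ∑ a, (F a : ℂ) * π a ∈ (⊥ : Subring ℂ) := by
  rw [← Finset.sum_fiberwise_of_maps_to (t := univ.image Subgroup.zpowers)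
    (g := Subgroup.zpowers) (fun a _ => mem_image_of_mem _ (mem_univ a))]
  refine sum_mem fun L hL => ?_
  obtain ⟨c, -, rfl⟩ := mem_image.mp hL
  rw [Finset.sum_congr rfl fun b hb => by rw [hF b c (mem_filter.mp hb).2], ← mul_sum]
  exact mul_mem (natCast_mem _ _) (sum_zpowers_eq_mem_bot π _)

theorem InCA.sum_mul_map_inv {F : A → ℕ} (hF : InCA F) :
    ∑ a, (F a : ℂ) * π a⁻¹ = ∑ a, (F a : ℂ) * π a :=
  Fintype.sum_equiv (Equiv.inv A) _ _ fun a => by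
    simp [hF a a⁻¹ Subgroup.zpowers_inv.symm]

end Characters

theorem Module.End.mem_of_hasEigenvalue_of_iSup_eigenspace_eq_top {K V : Type*} [Field K]
    [AddCommGroup V] [Module K V] {f : Module.End K V} {Λ : Set K}
    (h : ⨆ ν ∈ Λ, f.eigenspace ν = ⊤) {μ : K} (hμ : f.HasEigenvalue μ) : μ ∈ Λ := by
  by_contra hμΛ
  have hle : ⨆ ν ∈ Λ, f.eigenspace ν ≤ ⨆ ν ≠ μ, f.eigenspace ν :=
    biSup_mono fun ν hν => ne_of_mem_of_not_mem hν hμΛ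
  rw [h] at hle
  exact Module.End.hasEigenvalue_iff.mp hμ
    (disjoint_top.mp ((f.eigenspaces_iSupIndep μ).mono_right hle))

theorem Matrix.apply_mem_spectrum_map {n K L : Type*} [Fintype n] [DecidableEq n] [Field K] [Field L]
    (φ : K →+* L) {M : Matrix n n K} {μ : K} (hμ : μ ∈ spectrum K M) :
    φ μ ∈ spectrum L (M.map φ) := by
  rw [Matrix.mem_spectrum_iff_isRoot_charpoly] at hμ ⊢
  rw [Matrix.charpoly_map]
  exact hμ.map

namespace Dic

variable {A : Type*} [CommGroup A] {y : A} {hy : y * y = 1}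

def liftFalse : (A → ℂ) →ₗ[ℂ] (Dic A y hy → ℂ) where
  toFun u g := if g.t then 0 else u g.a
  map_add' u v := by ext ⟨t, a⟩; cases t <;> simp
  map_smul' c u := by ext ⟨t, a⟩; cases t <;> simp

def liftTrue : (A → ℂ) →ₗ[ℂ] (Dic A y hy → ℂ) where
  toFun u g := if g.t then u g.a⁻¹ else 0
  map_add' u v := by ext ⟨t, a⟩; cases t <;> simp
  map_smul' c u := by ext ⟨t, a⟩; cases t <;> simp

variable [Fintype A]

theorem groupMatrix_mulVec_lift {f : Dic A y hy → ℕ} (hinv : ∀ g, f g⁻¹ = f g)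
    (hatom : ∀ t, InCA fun a => f ⟨t, a⟩) (π : A →* ℂ) {c : ℂ} (hc : c * c = 1) :
    groupMatrix (fun g => (f g : ℂ)) *ᵥ (liftFalse π + c • liftTrue π) =
      ((∑ a, (f ⟨false, a⟩ : ℂ) * π a) + c * ∑ a, (f ⟨true, a⟩ : ℂ) * π a) •
        (liftFalse π + c • liftTrue π) := by
  set α := ∑ a, (f ⟨false, a⟩ : ℂ) * π a with hα_def
  set β := ∑ a, (f ⟨true, a⟩ : ℂ) * π a with hβ_def
  have hα : ∑ a, (f ⟨false, a⟩ : ℂ) * (π a)⁻¹ = α := by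
    simpa using (hatom false).sum_mul_map_inv π
  have hβ : ∑ a, (f ⟨true, a⟩ : ℂ) * (π a)⁻¹ = β := by
    simpa using (hatom true).sum_mul_map_inv π
  have hβy : π y * β = β := by
    rw [mul_sum]
    refine Fintype.sum_equiv (Equiv.mulLeft y) _ _ fun a => ?_
    have : f ⟨true, y * a⟩ = f ⟨true, a⟩ := hinv ⟨true, a⟩
    simp only [Equiv.coe_mulLeft, this, map_mul]
    ring
  ext ⟨s, b⟩
  rw [groupMatrix_mulVec_apply, sum_eq_add]
  cases s
  · have hrhs : (α + c * β) * π b = π b * α + c * π b * ∑ a, (f ⟨true, a⟩ : ℂ) * (π a)⁻¹ := by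
      rw [hβ]; ring
    simp only [liftFalse, LinearMap.coe_mk, AddHom.coe_mk, liftTrue, map_inv, Pi.add_apply, mul_t,
      bne_self_eq_false, Bool.false_eq_true, ↓reduceIte, mul_a, Bool.and_self, mul_one, map_mul,
      Pi.smul_apply, smul_eq_mul, mul_zero, add_zero, Bool.bne_true, Bool.not_false, Bool.and_true,
      mul_inv_rev, inv_inv, zero_add]
    rw [hrhs, hα_def, mul_sum, mul_sum]
    congr 1 <;> exact sum_congr rfl fun _ _ => by ring
  · have hrhs : (α + c * β) * (c * (π b)⁻¹) =
        c * (π b)⁻¹ * ∑ a, (f ⟨false, a⟩ : ℂ) * (π a)⁻¹ + (π b)⁻¹ * π y * β := by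
      rw [hα]; linear_combination (π b)⁻¹ * β * hc - (π b)⁻¹ * hβy
    simp only [liftFalse, LinearMap.coe_mk, AddHom.coe_mk, liftTrue, map_inv, Pi.add_apply, mul_t,
      Bool.bne_false, ↓reduceIte, Pi.smul_apply, mul_a, Bool.false_eq_true, Bool.and_false, mul_one,
      map_mul, mul_inv_rev, smul_eq_mul, zero_add, bne_self_eq_false, Bool.and_self, mul_zero,
      add_zero]
    rw [hrhs, hβ_def, mul_sum, mul_sum]
    congr 1 <;> exact sum_congr rfl fun _ _ => by ring

theorem iSup_eigenspace_groupMatrix_eq_top {f : Dic A y hy → ℕ} (hinv : ∀ g, f g⁻¹ = f g)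
    (hatom : ∀ t, InCA fun a => f ⟨t, a⟩) :
    ⨆ μ ∈ Set.range (Int.cast : ℤ → ℂ),
      Module.End.eigenspace (Matrix.toLin' (groupMatrix fun g => (f g : ℂ))) μ = ⊤ := by
  set E := ⨆ μ ∈ Set.range (Int.cast : ℤ → ℂ),
    Module.End.eigenspace (Matrix.toLin' (groupMatrix fun g => (f g : ℂ))) μ
  have heig (π : A →* ℂ) (c : ℤ) (hc : c * c = 1) : liftFalse π + (c : ℂ) • liftTrue π ∈ E := by
    obtain ⟨kα, hkα⟩ := Subring.mem_bot.mp ((hatom false).sum_mul_mem_bot π)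
    obtain ⟨kβ, hkβ⟩ := Subring.mem_bot.mp ((hatom true).sum_mul_mem_bot π)
    refine Submodule.mem_iSup_of_mem ((kα + c * kβ : ℤ) : ℂ)
      (Submodule.mem_iSup_of_mem ⟨_, rfl⟩ ?_)
    rw [Module.End.mem_eigenspace_iff, Matrix.toLin'_apply,
      groupMatrix_mulVec_lift hinv hatom π (by exact_mod_cast hc), ← hkα, ← hkβ]
    push_cast
    rfl
  have hrange : LinearMap.range (liftFalse (y := y) (hy := hy)) ⊔ LinearMap.range liftTrue ≤ E := by
    rw [LinearMap.range_eq_map, LinearMap.range_eq_map, ← span_range_monoidHom_eq_top,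
      Submodule.map_span, Submodule.map_span, sup_le_iff, Submodule.span_le, Submodule.span_le]
    constructor
    · rintro _ ⟨_, ⟨π, rfl⟩, rfl⟩
      rw [SetLike.mem_coe]
      convert E.smul_mem (2 : ℂ)⁻¹ (E.add_mem (heig π 1 rfl) (heig π (-1) rfl)) using 1
      push_cast
      module
    · rintro _ ⟨_, ⟨π, rfl⟩, rfl⟩
      rw [SetLike.mem_coe]
      convert E.smul_mem (2 : ℂ)⁻¹ (E.sub_mem (heig π 1 rfl) (heig π (-1) rfl)) using 1
      push_cast
      module
  refine top_unique fun φ _ => hrange (Submodule.mem_sup.mpr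
    ⟨_, ⟨fun a => φ ⟨false, a⟩, rfl⟩, _, ⟨fun a => φ ⟨true, a⁻¹⟩, rfl⟩, ?_⟩)
  ext ⟨t, a⟩
  cases t <;> simp [liftFalse, liftTrue]

theorem exists_intCast_eq_of_mem_spectrum_groupMatrix {f : Dic A y hy → ℕ}
    (hinv : ∀ g, f g⁻¹ = f g) (hatom : ∀ t, InCA fun a => f ⟨t, a⟩) :
    ∀ μ ∈ spectrum ℝ (groupMatrix fun g => (f g : ℝ)), ∃ k : ℤ, (k : ℝ) = μ := by
  intro μ hμ
  have h := Matrix.apply_mem_spectrum_map Complex.ofRealHom hμ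
  have hmap : (groupMatrix fun g => (f g : ℝ)).map Complex.ofRealHom =
      groupMatrix fun g => (f g : ℂ) := by
    ext
    simp [groupMatrix]
  rw [hmap, ← Matrix.spectrum_toLin', ← Module.End.hasEigenvalue_iff_mem_spectrum] at h
  obtain ⟨k, hk⟩ := Module.End.mem_of_hasEigenvalue_of_iSup_eigenspace_eq_top
    (iSup_eigenspace_groupMatrix_eq_top hinv hatom) h
  exact ⟨k, Complex.ofReal_injective (by simpa using hk)⟩

end Dic

theorem dic_special_distance_power_distance_integral_general {A : Type*} [CommGroup A] [Fintype A]
    (y : A) (hy : y * y = 1)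
    (S₁ : Set A) (hS₁ : InBoolAlg A S₁)
    (D : Finset ℕ)
    (S : Set (Dic A y hy))
    (hS : S = Dic.ofA '' S₁ ∪ (fun a => Dic.x A y hy * Dic.ofA a) '' ({1, y} : Set A)) :
    (∃ SD : Set (Dic A y hy),
      (1 : Dic A y hy) ∉ SD ∧ SD⁻¹ = SD ∧ distPower (cayley S) D = cayley SD) ∧
    IsDistanceIntegral (distPower (cayley S) D) := by
  set SD := {g : Dic A y hy | g ≠ 1 ∧ (cayley S).dist 1 g ∈ D}
  have hSD_inv : SD⁻¹ = SD := by
    ext g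
    simp [SD, cayley_dist_one_inv]
  have hSD_pow : ∀ k (hk : (Nat.card A).Coprime k) g, Dic.powMulEquiv hk g ∈ SD ↔ g ∈ SD := by
    intro k hk g
    subst hS
    simp only [SD, Set.mem_ofPred_eq, ne_eq, map_eq_one_iff _ (Dic.powMulEquiv hk).injective,
      cayley_dist_one_map _ (Dic.powMulEquiv_mem_iff hS₁ hk)]
  refine ⟨⟨SD, fun h => h.1 rfl, hSD_inv, distPower_cayley S D⟩, ?_⟩
  rw [IsDistanceIntegral, distPower_cayley, distMatrix_cayley]
  exact Dic.exists_intCast_eq_of_mem_spectrum_groupMatrix (cayley_dist_one_inv SD)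
    (Dic.inCA_of_forall_powMulEquiv fun k hk g => cayley_dist_one_map _ (hSD_pow k hk) g)

/-- Corollary 6.2: for `S₁ ⊆ A` with `1 ∉ S₁`, `S₁ ∈ B(A)`, `⟨S₁⟩ = A`,
and a non-empty finite set `D` of positive integers such that the distance power
`Cay(Dic(A,y), S₁ ∪ x{1,y})^D` is connected, this distance power is a Cayley graph over
`Dic(A,y)` which is distance integral. -/
theorem dic_special_distance_power_distance_integral {A : Type*} [CommGroup A] [Fintype A]
    (hA : Even (Fintype.card A)) (hexp : 3 ≤ Monoid.exponent A)
    (y : A) (hy : y * y = 1) (hy1 : y ≠ 1)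
    (S₁ : Set A) (h1S₁ : (1 : A) ∉ S₁) (hS₁ : InBoolAlg A S₁)
    (hgen₁ : Subgroup.closure S₁ = ⊤)
    (D : Finset ℕ) (hD : D.Nonempty) (hDpos : ∀ d ∈ D, 0 < d)
    (S : Set (Dic A y hy))
    (hS : S = Dic.ofA '' S₁ ∪ (fun a => Dic.x A y hy * Dic.ofA a) '' ({1, y} : Set A))
    (hconn : (distPower (cayley S) D).Connected) :
    (∃ SD : Set (Dic A y hy),
      (1 : Dic A y hy) ∉ SD ∧ SD⁻¹ = SD ∧ distPower (cayley S) D = cayley SD) ∧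
    IsDistanceIntegral (distPower (cayley S) D) :=
  dic_special_distance_power_distance_integral_general y hy S₁ hS₁ D S hS
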